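/- arXiv:1904.09851 — 6 statements merged into one kernel-verified Lean document; each statement's English description precedes it below -/
import Mathlib

section
/- Let P be a k×k quaternionic matrix such that all eigenvalues of P*P lie in [0,1] and the eigenspace of P*P for the eigenvalue 1 has dimension at least 2k − n (with 0 < k ≤ n). Then there exists an (n−k)×k quaternionic matrix T such that T*T + P*P = I_k, i.e., the block matrix [T; P] lies in the Stiefel manifold X_{n,k}. -/
open Quaternion Matrix

/-- The kernel of a quaternionic matrix, as a submodule of `Fin n → ℍ` over `ℍᵐᵒᵖ`
(i.e. with quaternionic scalars acting on the right). -/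
noncomputable def quatKer {m n : ℕ} (M : Matrix (Fin m) (Fin n) ℍ[ℝ]) :
    Submodule ℍ[ℝ]ᵐᵒᵖ (Fin n → ℍ[ℝ]) where
  carrier := {u | M.mulVec u = 0}
  add_mem' {u v} hu hv := by
    simp only [Set.mem_setOf_eq] at *
    rw [Matrix.mulVec_add, hu, hv, add_zero]
  zero_mem' := by simp [Matrix.mulVec_zero]
  smul_mem' c u hu := by
    simp only [Set.mem_setOf_eq] at *
    funext i
    have : (c • u) = fun j => u j * c.unop := by
      funext j; simp [MulOpposite.smul_eq_mul_unop]
    rw [this]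
    have h0 : M.mulVec u i = 0 := by rw [hu]; rfl
    simp only [Matrix.mulVec, dotProduct] at h0 ⊢
    calc ∑ j, M i j * (u j * c.unop) = (∑ j, M i j * u j) * c.unop := by
          rw [Finset.sum_mul]; exact Finset.sum_congr rfl fun j _ => (mul_assoc _ _ _).symm
      _ = 0 := by rw [h0, zero_mul]

noncomputable def opEquiv : ℍ[ℝ] ≃ₗ[ℍ[ℝ]ᵐᵒᵖ] ℍ[ℝ]ᵐᵒᵖ :=
  { MulOpposite.opAddEquiv with
    map_smul' := fun c q => by
      simp [MulOpposite.smul_eq_mul_unop] }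

noncomputable def quatPiBasis (k : ℕ) : Module.Basis (Fin k) ℍ[ℝ]ᵐᵒᵖ (Fin k → ℍ[ℝ]) :=
  (Pi.basisFun ℍ[ℝ]ᵐᵒᵖ (Fin k)).map (LinearEquiv.piCongrRight (fun _ => opEquiv)).symm

instance (k : ℕ) : FiniteDimensional ℍ[ℝ]ᵐᵒᵖ (Fin k → ℍ[ℝ]) :=
  Module.Finite.of_basis (quatPiBasis k)

theorem quatPi_finrank (k : ℕ) : Module.finrank ℍ[ℝ]ᵐᵒᵖ (Fin k → ℍ[ℝ]) = k := by
  rw [Module.finrank_eq_card_basis (quatPiBasis k), Fintype.card_fin]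

lemma real_of_star_eq (q : ℍ[ℝ]) (h : star q = q) : q = ((q.re : ℝ) : ℍ[ℝ]) := by
  have h1 := congrArg QuaternionAlgebra.imI h
  have h2 := congrArg QuaternionAlgebra.imJ h
  have h3 := congrArg QuaternionAlgebra.imK h
  simp at h1 h2 h3
  ext <;> simp [h1, h2, h3] <;> linarith

lemma herm_entry {k : ℕ} {Q : Matrix (Fin k) (Fin k) ℍ[ℝ]} (hQ : Qᴴ = Q) (a b : Fin k) :
    star (Q b a) = Q a b := by
  conv_rhs => rw [← hQ]
  rfl

lemma swap_dot {k : ℕ} {Q : Matrix (Fin k) (Fin k) ℍ[ℝ]} (hQ : Qᴴ = Q) (u w : Fin k → ℍ[ℝ]) :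
    star (star w ⬝ᵥ Q.mulVec u) = star u ⬝ᵥ Q.mulVec w := by
  simp only [dotProduct, mulVec, star_sum, star_star, Finset.mul_sum, Finset.sum_mul]
  rw [Finset.sum_comm]
  refine Finset.sum_congr rfl fun a _ => Finset.sum_congr rfl fun b _ => ?_
  simp only [StarMul.star_mul, star_star, Pi.star_apply]
  rw [← herm_entry hQ a b, mul_assoc]

lemma mulVec_ite {k : ℕ} (Q : Matrix (Fin k) (Fin k) ℍ[ℝ]) (a : Fin k) (q : ℍ[ℝ]) :
    Q.mulVec (fun c => if c = a then q else 0) = fun b => Q b a * q := by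
  funext b
  simp [mulVec, dotProduct, mul_ite, Finset.sum_ite_eq']

lemma ite_dot {k : ℕ} (a : Fin k) (q : ℍ[ℝ]) (v : Fin k → ℍ[ℝ]) :
    star (fun c => if c = a then q else 0) ⬝ᵥ v = star q * v a := by
  simp [dotProduct, Pi.star_apply, apply_ite, ite_mul, Finset.sum_ite_eq']

lemma diag_pos {k : ℕ} {Q : Matrix (Fin k) (Fin k) ℍ[ℝ]} (hQ : Qᴴ = Q)
    (hpsd : ∀ v, 0 ≤ (star v ⬝ᵥ Q.mulVec v).re) (hne : Q ≠ 0) :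
    ∃ a, 0 < (Q a a).re := by
  by_contra h
  push_neg at h
  have hdiag : ∀ a, Q a a = 0 := by
    intro a
    have h1 : (star (fun c => if c = a then (1:ℍ[ℝ]) else 0) ⬝ᵥ
        Q.mulVec (fun c => if c = a then (1:ℍ[ℝ]) else 0)) = Q a a := by
      rw [mulVec_ite, ite_dot]; simp
    have h2 := hpsd (fun c => if c = a then (1:ℍ[ℝ]) else 0)
    rw [h1] at h2
    have hre : (Q a a).re = 0 := le_antisymm (h a) h2
    rw [real_of_star_eq (Q a a) (herm_entry hQ a a), hre]
    simp
  apply hne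
  refine Matrix.ext fun a b => ?_
  set q : ℍ[ℝ] := -(Q a b) with hq
  set v1 : Fin k → ℍ[ℝ] := fun c => if c = a then q else 0 with hv1
  set v2 : Fin k → ℍ[ℝ] := fun c => if c = b then (1:ℍ[ℝ]) else 0 with hv2
  have hdot : star (v1 + v2) ⬝ᵥ Q.mulVec (v1 + v2)
      = star q * (Q a a * q) + star q * (Q a b * 1) + ((1:ℍ[ℝ]) * (Q b a * q) + 1 * (Q b b * 1)) := by
    rw [star_add, Matrix.mulVec_add, add_dotProduct, dotProduct_add,
      dotProduct_add]
    rw [hv1, hv2, mulVec_ite, mulVec_ite, ite_dot, ite_dot, ite_dot, ite_dot]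
    simp
  have h2 := hpsd (v1 + v2)
  rw [hdot, hdiag a, hdiag b] at h2
  simp only [zero_mul, mul_zero, one_mul, mul_one, zero_add, add_zero] at h2
  have hre2 : (Q b a * q).re = (star q * Q a b).re := by
    rw [← Quaternion.re_star (Q b a * q), StarMul.star_mul, herm_entry hQ a b]
  rw [Quaternion.re_add, hre2, hq] at h2
  have hn : (star (Q a b) * Q a b).re = normSq (Q a b) := by
    rw [Quaternion.star_mul_self]; simp
  simp only [star_neg, neg_mul, Quaternion.re_neg, hn] at h2
  have hle : normSq (Q a b) ≤ 0 := by linarith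
  have h0 : Q a b = 0 := by
    have hge := Quaternion.normSq_nonneg (a := Q a b)
    have : normSq (Q a b) = 0 := le_antisymm hle hge
    exact Quaternion.normSq_eq_zero.mp this
  exact h0

lemma factor {k : ℕ} : ∀ (m : ℕ) (Q : Matrix (Fin k) (Fin k) ℍ[ℝ]), Qᴴ = Q →
    (∀ v, 0 ≤ (star v ⬝ᵥ Q.mulVec v).re) →
    (k ≤ m + Module.finrank ℍ[ℝ]ᵐᵒᵖ (quatKer Q)) →
    ∃ w : Fin m → Fin k → ℍ[ℝ], ∀ a b, Q a b = ∑ j, w j a * star (w j b) := by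
  intro m
  induction m with
  | zero =>
    intro Q hQ hpsd hrank
    have hle : Module.finrank ℍ[ℝ]ᵐᵒᵖ (quatKer Q) ≤ k := by
      have := Submodule.finrank_le (quatKer Q)
      rwa [quatPi_finrank] at this
    have heq : Module.finrank ℍ[ℝ]ᵐᵒᵖ (quatKer Q) = k := le_antisymm hle (by omega)
    have htop : quatKer Q = ⊤ := by
      apply Submodule.eq_top_of_finrank_eq
      rw [heq, quatPi_finrank]
    refine ⟨fun _ => 0, fun a b => ?_⟩
    have hb : (fun c => if c = b then (1:ℍ[ℝ]) else 0) ∈ quatKer Q := by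
      rw [htop]; trivial
    have : Q.mulVec (fun c => if c = b then (1:ℍ[ℝ]) else 0) = 0 := hb
    have h0 : Q a b = 0 := by
      have := congrFun this a
      rw [mulVec_ite] at this
      simpa using this
    simp [h0]
  | succ m ih =>
    intro Q hQ hpsd hrank
    by_cases hQ0 : Q = 0
    · exact ⟨fun _ => 0, fun a b => by simp [hQ0]⟩
    obtain ⟨a, ha⟩ := diag_pos hQ hpsd hQ0
    set al : ℝ := (Q a a).re with hal
    have hQaa : Q a a = (al : ℍ[ℝ]) := real_of_star_eq (Q a a) (herm_entry hQ a a)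
    set be : ℍ[ℝ] := ((al⁻¹ : ℝ) : ℍ[ℝ]) with hbe
    have hfact1 : Q a a * be = 1 := by
      rw [hQaa, hbe, ← Quaternion.coe_mul, mul_inv_cancel₀ (ne_of_gt ha)]
      simp
    have hfact2 : be * Q a a = 1 := by
      rw [hQaa, hbe, ← Quaternion.coe_mul, inv_mul_cancel₀ (ne_of_gt ha)]
      simp
    set Q' : Matrix (Fin k) (Fin k) ℍ[ℝ] := fun b c => Q b c - Q b a * (be * Q a c) with hQ'
    have hstarbe : star be = be := by rw [hbe]; simp
    have hherm' : Q'ᴴ = Q' := by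
      refine Matrix.ext fun b c => ?_
      show star (Q' c b) = Q' b c
      rw [hQ']
      simp only [star_sub, StarMul.star_mul, hstarbe]
      rw [herm_entry hQ b c, herm_entry hQ b a, herm_entry hQ a c, mul_assoc]
    -- mulVec formula for Q'
    have hmv : ∀ v : Fin k → ℍ[ℝ], Q'.mulVec v
        = fun b => Q.mulVec v b - Q b a * (be * Q.mulVec v a) := by
      intro v
      funext b
      simp only [hQ', mulVec, dotProduct, sub_mul, Finset.sum_sub_distrib]
      congr 1
      rw [Finset.mul_sum, Finset.mul_sum]
      exact Finset.sum_congr rfl fun c _ => by rw [mul_assoc, mul_assoc]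
    -- dot formula
    have hsum : ∀ v : Fin k → ℍ[ℝ], star (Q.mulVec v a) = ∑ b, star (v b) * Q b a := by
      intro v
      simp only [mulVec, dotProduct, star_sum, StarMul.star_mul]
      exact Finset.sum_congr rfl fun b _ => by rw [herm_entry hQ b a]
    have hdot' : ∀ v : Fin k → ℍ[ℝ], star v ⬝ᵥ Q'.mulVec v
        = star v ⬝ᵥ Q.mulVec v - star (Q.mulVec v a) * (be * Q.mulVec v a) := by
      intro v
      rw [hmv]
      simp only [dotProduct, mul_sub, Finset.sum_sub_distrib, Pi.star_apply]
      congr 1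
      rw [hsum v, Finset.sum_mul]
      exact Finset.sum_congr rfl fun b _ => (mul_assoc _ _ _).symm
    -- Cauchy-Schwarz
    have hCS : ∀ v : Fin k → ℍ[ℝ],
        (star (Q.mulVec v a) * (be * Q.mulVec v a)).re ≤ (star v ⬝ᵥ Q.mulVec v).re := by
      intro v
      set s : ℍ[ℝ] := Q.mulVec v a with hs
      set d : Fin k → ℍ[ℝ] := fun c => if c = a then be * s else 0 with hd
      have hexp : star (v - d) ⬝ᵥ Q.mulVec (v - d)
          = star v ⬝ᵥ Q.mulVec v - star d ⬝ᵥ Q.mulVec v - star v ⬝ᵥ Q.mulVec d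
            + star d ⬝ᵥ Q.mulVec d := by
        rw [star_sub, Matrix.mulVec_sub, sub_dotProduct, dotProduct_sub,
          dotProduct_sub]
        abel
      have e1 : star d ⬝ᵥ Q.mulVec v = (star s * be) * s := by
        rw [hd, ite_dot]
        simp only [StarMul.star_mul, hstarbe]
        rfl
      have e2 : star v ⬝ᵥ Q.mulVec d = star s * (be * s) := by
        rw [hd, mulVec_ite]
        simp only [dotProduct, Pi.star_apply]
        have : ∀ x, star (v x) * (Q x a * (be * s)) = (star (v x) * Q x a) * (be * s) :=
          fun x => (mul_assoc _ _ _).symm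
        rw [Finset.sum_congr rfl fun x _ => this x, ← Finset.sum_mul, ← hsum v]
      have e3 : star d ⬝ᵥ Q.mulVec d = (star s * be) * s := by
        rw [hd, mulVec_ite, ite_dot]
        simp only [StarMul.star_mul, hstarbe]
        rw [← mul_assoc (Q a a) be s, hfact1, one_mul]
      have h0 := hpsd (v - d)
      rw [hexp, e1, e2, e3] at h0
      have hassoc : (star s * be) * s = star s * (be * s) := mul_assoc _ _ _
      rw [hassoc] at h0
      simp only [Quaternion.re_sub, Quaternion.re_add] at h0
      linarith
    have hpsd' : ∀ v, 0 ≤ (star v ⬝ᵥ Q'.mulVec v).re := by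
      intro v
      rw [hdot']
      simp only [Quaternion.re_sub]
      have := hCS v
      linarith
    -- kernels
    have hker1 : quatKer Q ≤ quatKer Q' := by
      intro v hv
      have hv' : Q.mulVec v = 0 := hv
      show Q'.mulVec v = 0
      rw [hmv, hv']
      funext b
      simp
    set ea : Fin k → ℍ[ℝ] := fun c => if c = a then (1:ℍ[ℝ]) else 0 with hea
    have hea' : ea ∈ quatKer Q' := by
      show Q'.mulVec ea = 0
      rw [hmv, hea, mulVec_ite]
      funext b
      simp only [mul_one, Pi.zero_apply]
      rw [hfact2, mul_one, sub_self]
    have heane : ea ∉ quatKer Q := by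
      intro hmem
      have hv' : Q.mulVec ea = 0 := hmem
      have := congrFun hv' a
      rw [hea, mulVec_ite] at this
      simp only [mul_one, Pi.zero_apply] at this
      rw [this] at hQaa
      have : al = 0 := by
        have := congrArg QuaternionAlgebra.re hQaa
        simpa using this.symm
      exact absurd this (ne_of_gt ha)
    have hlt : quatKer Q < quatKer Q ⊔ Submodule.span ℍ[ℝ]ᵐᵒᵖ {ea} := by
      refine lt_of_le_of_ne le_sup_left fun hEq => ?_
      apply heane
      rw [hEq]
      exact Submodule.mem_sup_right (Submodule.subset_span rfl)
    have hle2 : quatKer Q ⊔ Submodule.span ℍ[ℝ]ᵐᵒᵖ {ea} ≤ quatKer Q' := by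
      refine sup_le hker1 ?_
      rw [Submodule.span_le, Set.singleton_subset_iff]
      exact hea'
    have hrank' : Module.finrank ℍ[ℝ]ᵐᵒᵖ (quatKer Q) + 1
        ≤ Module.finrank ℍ[ℝ]ᵐᵒᵖ (quatKer Q') := by
      have l1 := Submodule.finrank_lt_finrank_of_lt hlt
      have l2 := Submodule.finrank_mono hle2
      omega
    obtain ⟨w', hw'⟩ := ih Q' hherm' hpsd' (by omega)
    set g : ℍ[ℝ] := ((Real.sqrt al⁻¹ : ℝ) : ℍ[ℝ]) with hg
    have hgg : g * g = be := by
      rw [hg, hbe, ← Quaternion.coe_mul, Real.mul_self_sqrt (inv_nonneg.mpr ha.le)]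
    have hstarg : star g = g := by rw [hg]; simp
    refine ⟨Fin.cons (fun b => Q b a * g) w', fun b c => ?_⟩
    rw [Fin.sum_univ_succ]
    simp only [Fin.cons_zero, Fin.cons_succ]
    have hterm : (Q b a * g) * star (Q c a * g) = Q b a * (be * Q a c) := by
      simp only [StarMul.star_mul, hstarg]
      rw [herm_entry hQ a c, mul_assoc, ← mul_assoc g g, hgg]
    rw [hterm, ← hw' b c]
    simp only [hQ']
    abel

lemma re_sum {ι : Type*} (s : Finset ι) (f : ι → ℍ[ℝ]) :
    (∑ i ∈ s, f i).re = ∑ i ∈ s, (f i).re :=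
  map_sum (QuaternionAlgebra.reₗ (R := ℝ) (c₁ := -1) (c₂ := 0) (c₃ := -1)) f s

lemma dot_conjT {k : ℕ} (P : Matrix (Fin k) (Fin k) ℍ[ℝ]) (v w : Fin k → ℍ[ℝ]) :
    star v ⬝ᵥ Pᴴ.mulVec w = star (P.mulVec v) ⬝ᵥ w := by
  simp only [dotProduct, mulVec, conjTranspose_apply, star_sum, StarMul.star_mul,
    Pi.star_apply, Finset.mul_sum, Finset.sum_mul]
  rw [Finset.sum_comm]
  exact Finset.sum_congr rfl fun a _ => Finset.sum_congr rfl fun b _ => (mul_assoc _ _ _).symm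

lemma self_dot_re {k : ℕ} (u : Fin k → ℍ[ℝ]) : (star u ⬝ᵥ u).re = ∑ i, ‖u i‖ ^ 2 := by
  simp only [dotProduct, Pi.star_apply]
  rw [re_sum]
  refine Finset.sum_congr rfl fun i _ => ?_
  rw [Quaternion.star_mul_self]
  simp [Quaternion.normSq_eq_norm_mul_self, sq]

/-- If all eigenvalues of `PᴴP` lie in `[0,1]` (equivalently `‖Pv‖ ≤ ‖v‖` for all `v`,
since `PᴴP` is Hermitian positive semidefinite) and the eigenspace of `PᴴP` for the
eigenvalue 1 has dimension at least `2k − n`, then `P` is `n`-admissible: there is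
`T ∈ ℍ^{(n−k)×k}` with `Tᴴ T + Pᴴ P = I_k`, i.e. `[T; P]` lies in `X_{n,k}`. -/
theorem admissible_of_eigenvalues (n k : ℕ) (hk : 0 < k) (hkn : k ≤ n)
    (P : Matrix (Fin k) (Fin k) ℍ[ℝ])
    (hbound : ∀ v : Fin k → ℍ[ℝ], ∑ i, ‖P.mulVec v i‖ ^ 2 ≤ ∑ i, ‖v i‖ ^ 2)
    (hdim : 2 * (k : ℤ) - n ≤ (Module.finrank ℍ[ℝ]ᵐᵒᵖ (quatKer (1 - Pᴴ * P)) : ℤ)) :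
    ∃ T : Matrix (Fin (n - k)) (Fin k) ℍ[ℝ], Tᴴ * T + Pᴴ * P = 1 := by
  set Q : Matrix (Fin k) (Fin k) ℍ[ℝ] := 1 - Pᴴ * P with hQdef
  have hherm : Qᴴ = Q := by
    rw [hQdef, conjTranspose_sub, conjTranspose_one, conjTranspose_mul,
      conjTranspose_conjTranspose]
  have hpsd : ∀ v, 0 ≤ (star v ⬝ᵥ Q.mulVec v).re := by
    intro v
    have hsplit : star v ⬝ᵥ Q.mulVec v
        = star v ⬝ᵥ v - star (P.mulVec v) ⬝ᵥ (P.mulVec v) := by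
      rw [hQdef, Matrix.sub_mulVec, dotProduct_sub, Matrix.one_mulVec,
        ← Matrix.mulVec_mulVec, dot_conjT]
    rw [hsplit, Quaternion.re_sub, self_dot_re, self_dot_re]
    have := hbound v
    linarith
  have hrank : k ≤ (n - k) + Module.finrank ℍ[ℝ]ᵐᵒᵖ (quatKer Q) := by
    omega
  obtain ⟨w, hw⟩ := factor (n - k) Q hherm hpsd hrank
  refine ⟨fun j a => star (w j a), ?_⟩
  refine Matrix.ext fun a b => ?_
  rw [Matrix.add_apply, Matrix.mul_apply]
  have hTT : ∑ j, (fun j a => star (w j a))ᴴ a j * star (w j b) = Q a b := by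
    rw [hw a b]
    exact Finset.sum_congr rfl fun j _ => by show star (star (w j a)) * _ = _; rw [star_star]
  change ∑ j, (fun j a => star (w j a))ᴴ a j * star (w j b) + _ = _
  rw [hTT, hQdef]
  simp [Matrix.sub_apply, Matrix.add_apply, Matrix.mul_apply]
end

section
/- Let s, t, r be nonnegative integers with s + t + r = k ≤ n, and let D = diag(0_s, −I_t, I_r) be the k×k block-diagonal quaternionic matrix with an s×s zero block, then −I_t, then I_r on the diagonal. Then D is n-admissible (i.e., there exists T ∈ ℍ^{(n−k)×k} with T*T + D*D = I_k) if and only if r + t ≥ 2k − n. -/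
open Quaternion Matrix

private lemma hD_lemma (k s t : ℕ) :
    (Matrix.diagonal fun i : Fin k =>
      if (i : ℕ) < s then (0 : ℍ[ℝ]) else if (i : ℕ) < s + t then -1 else 1)ᴴ *
    (Matrix.diagonal fun i : Fin k =>
      if (i : ℕ) < s then (0 : ℍ[ℝ]) else if (i : ℕ) < s + t then -1 else 1)
    = Matrix.diagonal (fun i : Fin k => if (i : ℕ) < s then (0:ℍ[ℝ]) else 1) := by
  rw [conjTranspose, Matrix.diagonal_transpose, Matrix.diagonal_map (by simp),
    Matrix.diagonal_mul_diagonal]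
  apply congrArg
  funext i
  split_ifs <;> simp

/-- The block-diagonal matrix `diag(0_s, −I_t, I_r)` is `n`-admissible if and only if
`r + t ≥ 2k − n`. -/
theorem diag_admissible_iff (n k s t r : ℕ) (hk : 0 < k) (hkn : k ≤ n)
    (hstr : s + t + r = k) :
    (∃ T : Matrix (Fin (n - k)) (Fin k) ℍ[ℝ],
        Tᴴ * T +
          (Matrix.diagonal fun i : Fin k =>
            if (i : ℕ) < s then (0 : ℍ[ℝ]) else if (i : ℕ) < s + t then -1 else 1)ᴴ *
          (Matrix.diagonal fun i : Fin k =>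
            if (i : ℕ) < s then (0 : ℍ[ℝ]) else if (i : ℕ) < s + t then -1 else 1) = 1) ↔
      2 * k ≤ n + (r + t) := by
  have hsk : s ≤ k := by omega
  constructor
  · rintro ⟨T, hT⟩
    rw [hD_lemma k s t] at hT
    have key : ∀ i j : Fin k, (i : ℕ) < s →
        ∑ m, star (T m i) * T m j = if i = j then (1:ℍ[ℝ]) else 0 := by
      intro i j hi
      have h1 := congrFun (congrFun hT i) j
      simp only [Matrix.add_apply, Matrix.mul_apply, Matrix.conjTranspose_apply,
        Matrix.diagonal_apply, Matrix.one_apply, hi, if_true] at h1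
      simpa using h1
    have hsnk : s ≤ n - k := by
      set e : Fin s → Fin k := fun j => ⟨j, j.2.trans_le hsk⟩ with he
      set f : Fin s → (Fin (n - k) → ℍ[ℝ]) := fun j m => star (T m (e j)) with hf
      have hli : LinearIndependent ℍ[ℝ] f := by
        rw [Fintype.linearIndependent_iff]
        intro g hg i
        have h0 : ∀ m, ∑ j, g j * f j m = 0 := by
          intro m
          have := congrFun hg m
          simpa [Finset.sum_apply] using this
        have heq : ∀ b : Fin s, (e b = e i) ↔ b = i := by
          intro b
          simp [he, Fin.ext_iff]
        have hstep : (g i : ℍ[ℝ]) = ∑ m, (∑ j, g j * f j m) * T m (e i) := by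
          calc (g i : ℍ[ℝ]) = ∑ j, g j * (if e j = e i then (1:ℍ[ℝ]) else 0) := by
                rw [Finset.sum_eq_single i]
                · simp
                · intro b _ hb
                  simp [heq, hb]
                · simp
            _ = ∑ j, g j * ∑ m, star (T m (e j)) * T m (e i) := by
                refine Finset.sum_congr rfl fun j _ => ?_
                rw [key (e j) (e i) j.2]
            _ = ∑ j, ∑ m, g j * (star (T m (e j)) * T m (e i)) := by
                simp [Finset.mul_sum]
            _ = ∑ m, ∑ j, g j * f j m * T m (e i) := by
                rw [Finset.sum_comm]
                simp [hf, mul_assoc]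
            _ = ∑ m, (∑ j, g j * f j m) * T m (e i) := by
                simp [Finset.sum_mul]
        rw [hstep]
        simp [h0]
      have hcard := hli.fintype_card_le_finrank
      simpa [Module.finrank_fintype_fun_eq_card] using hcard
    omega
  · intro h
    have hsnk : s ≤ n - k := by omega
    refine ⟨Matrix.of fun m j => if (m : ℕ) = (j : ℕ) ∧ (j : ℕ) < s then (1:ℍ[ℝ]) else 0, ?_⟩
    rw [hD_lemma k s t]
    refine Matrix.ext fun i j => ?_
    simp only [Matrix.add_apply, Matrix.mul_apply, Matrix.conjTranspose_apply, Matrix.of_apply,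
      Matrix.diagonal_apply, Matrix.one_apply]
    by_cases hi : (i : ℕ) < s
    · by_cases hij : i = j
      · subst hij
        have hm : (⟨(i:ℕ), lt_of_lt_of_le hi hsnk⟩ : Fin (n-k)) ∈ Finset.univ := Finset.mem_univ _
        rw [Finset.sum_eq_single (⟨(i:ℕ), lt_of_lt_of_le hi hsnk⟩ : Fin (n-k))]
        · simp [hi]
        · intro b _ hb
          have : (b : ℕ) ≠ (i : ℕ) := fun hc => hb (Fin.ext hc)
          simp [this]
        · simp
      · have hsum : ∀ m : Fin (n-k),
            star (if (m : ℕ) = (i : ℕ) ∧ (i : ℕ) < s then (1:ℍ[ℝ]) else 0) *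
              (if (m : ℕ) = (j : ℕ) ∧ (j : ℕ) < s then (1:ℍ[ℝ]) else 0) = 0 := by
          intro m
          by_cases hmi : (m : ℕ) = (i : ℕ)
          · have : ¬((m : ℕ) = (j : ℕ) ∧ (j : ℕ) < s) := by
              rintro ⟨h1, _⟩
              exact hij (Fin.ext (hmi ▸ h1).symm ▸ rfl)
            simp [this]
          · simp [hmi]
        rw [Finset.sum_congr rfl fun m _ => hsum m]
        simp [hij, hi]
    · have hsum : ∀ m : Fin (n-k),
          star (if (m : ℕ) = (i : ℕ) ∧ (i : ℕ) < s then (1:ℍ[ℝ]) else 0) *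
            (if (m : ℕ) = (j : ℕ) ∧ (j : ℕ) < s then (1:ℍ[ℝ]) else 0) = 0 := by
        intro m
        simp [hi]
      rw [Finset.sum_congr rfl fun m _ => hsum m]
      simp [hi]
end

section
/- Let M be an m×n quaternionic matrix and N an n×m quaternionic matrix. Then I_m + MN is invertible if and only if I_n + NM is invertible. Moreover, Sdet(I_m + MN) = Sdet(I_n + NM), where Sdet is the Study determinant. -/
open Quaternion Matrix Complex

open Quaternion Matrix Complex

/-- The complex matrix `X` in the decomposition `M = X + jY` of a quaternionic matrix. -/
noncomputable def chiX {n : Type*} (M : Matrix n n ℍ[ℝ]) : Matrix n n ℂ :=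
  fun i j => ⟨(M i j).re, (M i j).imI⟩

/-- The complex matrix `Y` in the decomposition `M = X + jY` of a quaternionic matrix. -/
noncomputable def chiY {n : Type*} (M : Matrix n n ℍ[ℝ]) : Matrix n n ℂ :=
  fun i j => ⟨(M i j).imJ, -(M i j).imK⟩

/-- The standard complex representation `χ(M) = [[X, −conj Y], [Y, conj X]]`. -/
noncomputable def chi {n : Type*} (M : Matrix n n ℍ[ℝ]) : Matrix (n ⊕ n) (n ⊕ n) ℂ :=
  Matrix.fromBlocks (chiX M) (-(chiY M).map (starRingEnd ℂ)) (chiY M)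
    ((chiX M).map (starRingEnd ℂ))


/-- The Study determinant `Sdet(M) = sqrt(det χ(M))` (the determinant of `χ(M)` is a
nonnegative real number, so we take the square root of its real part). -/
noncomputable def Sdet {n : Type*} [Fintype n] [DecidableEq n]
    (M : Matrix n n ℍ[ℝ]) : ℝ :=
  Real.sqrt ((chi M).det.re)

noncomputable def aHom : ℍ[ℝ] →+ ℂ where
  toFun q := ⟨q.re, q.imI⟩
  map_zero' := by apply Complex.ext <;> simp
  map_add' p q := by apply Complex.ext <;> simp

noncomputable def bHom : ℍ[ℝ] →+ ℂ where
  toFun q := ⟨q.imJ, -q.imK⟩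
  map_zero' := by apply Complex.ext <;> simp
  map_add' p q := by apply Complex.ext <;> simp <;> ring

lemma aHom_mul (p q : ℍ[ℝ]) :
    aHom (p * q) = aHom p * aHom q - (starRingEnd ℂ) (bHom p) * bHom q := by
  apply Complex.ext <;>
    simp [aHom, bHom, Quaternion.re_mul, Quaternion.imI_mul, Complex.mul_re, Complex.mul_im] <;> ring

lemma bHom_mul (p q : ℍ[ℝ]) :
    bHom (p * q) = (starRingEnd ℂ) (aHom p) * bHom q + bHom p * aHom q := by
  apply Complex.ext <;>
    simp [aHom, bHom, Quaternion.imJ_mul, Quaternion.imK_mul, Complex.mul_re, Complex.mul_im] <;> ring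

lemma aHom_one : aHom 1 = 1 := by apply Complex.ext <;> simp [aHom]
lemma bHom_one : bHom 1 = 0 := by apply Complex.ext <;> simp [bHom]

noncomputable def cX {m n : Type*} (M : Matrix m n ℍ[ℝ]) : Matrix m n ℂ :=
  fun i j => aHom (M i j)
noncomputable def cY {m n : Type*} (M : Matrix m n ℍ[ℝ]) : Matrix m n ℂ :=
  fun i j => bHom (M i j)
noncomputable def cchi {m n : Type*} (M : Matrix m n ℍ[ℝ]) : Matrix (m ⊕ m) (n ⊕ n) ℂ :=
  Matrix.fromBlocks (cX M) (-(cY M).map (starRingEnd ℂ)) (cY M)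
    ((cX M).map (starRingEnd ℂ))

lemma cchi_one {n : Type*} [Fintype n] [DecidableEq n] :
    cchi (1 : Matrix n n ℍ[ℝ]) = 1 := by
  have hX : cX (1 : Matrix n n ℍ[ℝ]) = 1 := by
    ext i j
    by_cases h : i = j <;> simp [cX, Matrix.one_apply, h, aHom_one]
  have hY : cY (1 : Matrix n n ℍ[ℝ]) = 0 := by
    ext i j
    by_cases h : i = j <;> simp [cY, Matrix.one_apply, h, bHom_one]
  simp [cchi, hX, hY, Matrix.fromBlocks_one]

lemma cchi_mul {m n p : Type*} [Fintype n] (P : Matrix m n ℍ[ℝ]) (Q : Matrix n p ℍ[ℝ]) :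
    cchi (P * Q) = cchi P * cchi Q := by
  have hX : cX (P * Q) = cX P * cX Q - (cY P).map (starRingEnd ℂ) * cY Q := by
    ext i j
    simp only [cX, cY, Matrix.mul_apply, Matrix.sub_apply, Matrix.map_apply, Matrix.mul_apply,
      ← Finset.sum_sub_distrib]
    rw [map_sum]
    exact Finset.sum_congr rfl fun k _ => aHom_mul _ _
  have hY : cY (P * Q) = (cX P).map (starRingEnd ℂ) * cY Q + cY P * cX Q := by
    ext i j
    simp only [cX, cY, Matrix.mul_apply, Matrix.add_apply, Matrix.map_apply,
      ← Finset.sum_add_distrib]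
    rw [map_sum]
    exact Finset.sum_congr rfl fun k _ => bHom_mul _ _
  simp only [cchi, Matrix.fromBlocks_multiply, hX, hY]
  ext i j
  cases i <;> cases j <;>
    simp [Matrix.fromBlocks, Matrix.map_apply, Matrix.mul_apply, Matrix.sub_apply,
      Matrix.add_apply, map_sum, Finset.sum_add_distrib, sub_eq_add_neg, Finset.sum_neg_distrib] <;>
    abel

lemma cchi_add {m n : Type*} (P Q : Matrix m n ℍ[ℝ]) : cchi (P + Q) = cchi P + cchi Q := by
  ext i j
  cases i <;> cases j <;> simp [cchi, cX, cY, Matrix.fromBlocks, Matrix.add_apply, map_add] <;> ring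

set_option maxHeartbeats 1000000 in
lemma isUnit_one_add_swap {a b : ℕ} (A : Matrix (Fin a) (Fin b) ℍ[ℝ])
    (B : Matrix (Fin b) (Fin a) ℍ[ℝ]) (h : IsUnit (1 + A * B)) : IsUnit (1 + B * A) := by
  obtain ⟨u, hu⟩ := h
  set U : Matrix (Fin a) (Fin a) ℍ[ℝ] := u⁻¹.val with hUdef
  have hU : (1 + A * B) * U = 1 := by rw [← hu]; exact u.mul_inv
  have hU' : U * (1 + A * B) = 1 := by rw [← hu]; exact u.inv_mul
  have e1 : A * B * U = 1 - U := by
    rw [add_mul, one_mul] at hU; exact eq_sub_of_add_eq' hU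
  have e2 : U * (A * B) = 1 - U := by
    rw [mul_add, mul_one] at hU'; exact eq_sub_of_add_eq' hU'
  refine ⟨⟨1 + B * A, 1 - B * U * A, ?_, ?_⟩, rfl⟩
  · have e3 : B * A * (B * U * A) = B * A - B * U * A := by
      have h1 : B * A * (B * U * A) = B * (A * B * U) * A := by
        simp only [Matrix.mul_assoc]
      rw [h1, e1, Matrix.mul_sub, Matrix.mul_one, Matrix.sub_mul]
    rw [add_mul, one_mul, mul_sub, mul_one, e3]
    abel
  · have e4 : B * U * A * (B * A) = B * A - B * U * A := by
      have h1 : B * U * A * (B * A) = B * (U * (A * B)) * A := by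
        simp only [Matrix.mul_assoc]
      rw [h1, e2, Matrix.mul_sub, Matrix.mul_one, Matrix.sub_mul]
    rw [sub_mul, one_mul, mul_add, mul_one, e4]
    abel

/-- For `M ∈ ℍ^{m×n}` and `N ∈ ℍ^{n×m}`, the matrix `I_m + MN` is invertible iff
`I_n + NM` is, and `Sdet(I_m + MN) = Sdet(I_n + NM)`. -/
theorem sdet_one_add_mul_comm {m n : ℕ}
    (M : Matrix (Fin m) (Fin n) ℍ[ℝ]) (N : Matrix (Fin n) (Fin m) ℍ[ℝ]) :
    (IsUnit (1 + M * N) ↔ IsUnit (1 + N * M)) ∧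
      Sdet (1 + M * N) = Sdet (1 + N * M) := by
  constructor
  · exact ⟨isUnit_one_add_swap M N, isUnit_one_add_swap N M⟩
  · have hchi : ∀ {k : ℕ} (A : Matrix (Fin k) (Fin k) ℍ[ℝ]), chi A = cchi A := fun A => rfl
    have hdet : (chi (1 + M * N)).det = (chi (1 + N * M)).det := by
      rw [hchi, hchi, cchi_add, cchi_add, cchi_mul, cchi_mul, cchi_one, cchi_one,
        Matrix.det_one_add_mul_comm]
    unfold Sdet
    rw [hdet]
end

section
/- Let u, v, γ be quaternions with v ≠ 0, |γ| = 1, |u|² + |v|² = 1, and let c₁, c₂ ∈ [0,1] be real. If the 2×2 quaternionic matrix [[u + c₁, −v̄γ], [v, v·ū·v⁻¹·γ + c₂]] is not invertible (as a right ℍ-linear map on ℍ²), then c₁ = c₂ = 1. -/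
open Quaternion Matrix

/-- Schur-complement criterion: over a division ring, if `c ≠ 0` and
`b - a * c⁻¹ * d ≠ 0`, then `!![a, b; c, d]` is a unit. -/

lemma isUnit_fin_two_of {K : Type*} [DivisionRing K] (a b c d : K) (hc : c ≠ 0)
    (hS : b - a * c⁻¹ * d ≠ 0) : IsUnit !![a, b; c, d] := by
  set S := b - a * c⁻¹ * d with hSdef
  have e1 : a * -(c⁻¹ * d * S⁻¹) + b * S⁻¹ = 1 := by
    have : a * -(c⁻¹ * d * S⁻¹) + b * S⁻¹ = (b - a * c⁻¹ * d) * S⁻¹ := by noncomm_ring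
    rw [this, ← hSdef, mul_inv_cancel₀ hS]
  have e2 : a * (c⁻¹ + c⁻¹ * d * S⁻¹ * a * c⁻¹) + b * -(S⁻¹ * a * c⁻¹) = 0 := by
    have : a * (c⁻¹ + c⁻¹ * d * S⁻¹ * a * c⁻¹) + b * -(S⁻¹ * a * c⁻¹)
        = a * c⁻¹ - (b - a * c⁻¹ * d) * S⁻¹ * (a * c⁻¹) := by noncomm_ring
    rw [this, ← hSdef, mul_inv_cancel₀ hS, one_mul, sub_self]
  have e3 : c * -(c⁻¹ * d * S⁻¹) + d * S⁻¹ = 0 := by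
    have : c * -(c⁻¹ * d * S⁻¹) + d * S⁻¹ = -(c * (c⁻¹ * (d * S⁻¹))) + d * S⁻¹ := by
      noncomm_ring
    rw [this, mul_inv_cancel_left₀ hc, neg_add_cancel]
  have e4 : c * (c⁻¹ + c⁻¹ * d * S⁻¹ * a * c⁻¹) + d * -(S⁻¹ * a * c⁻¹) = 1 := by
    have : c * (c⁻¹ + c⁻¹ * d * S⁻¹ * a * c⁻¹) + d * -(S⁻¹ * a * c⁻¹)
        = c * c⁻¹ + (c * (c⁻¹ * (d * S⁻¹ * a * c⁻¹)) - d * S⁻¹ * a * c⁻¹) := by noncomm_ring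
    rw [this, mul_inv_cancel_left₀ hc, sub_self, add_zero, mul_inv_cancel₀ hc]
  have e5 : -(c⁻¹ * d * S⁻¹) * a + (c⁻¹ + c⁻¹ * d * S⁻¹ * a * c⁻¹) * c = 1 := by
    have : -(c⁻¹ * d * S⁻¹) * a + (c⁻¹ + c⁻¹ * d * S⁻¹ * a * c⁻¹) * c
        = c⁻¹ * c + (c⁻¹ * d * S⁻¹ * a * c⁻¹ * c - c⁻¹ * d * S⁻¹ * a) := by noncomm_ring
    rw [this, inv_mul_cancel_right₀ hc, sub_self, add_zero, inv_mul_cancel₀ hc]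
  have e6 : -(c⁻¹ * d * S⁻¹) * b + (c⁻¹ + c⁻¹ * d * S⁻¹ * a * c⁻¹) * d = 0 := by
    have : -(c⁻¹ * d * S⁻¹) * b + (c⁻¹ + c⁻¹ * d * S⁻¹ * a * c⁻¹) * d
        = c⁻¹ * d - c⁻¹ * d * (S⁻¹ * (b - a * c⁻¹ * d)) := by noncomm_ring
    rw [this, ← hSdef, inv_mul_cancel₀ hS, mul_one, sub_self]
  have e7 : S⁻¹ * a + -(S⁻¹ * a * c⁻¹) * c = 0 := by
    have : S⁻¹ * a + -(S⁻¹ * a * c⁻¹) * c = S⁻¹ * a - S⁻¹ * a * c⁻¹ * c := by noncomm_ring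
    rw [this, inv_mul_cancel_right₀ hc, sub_self]
  have e8 : S⁻¹ * b + -(S⁻¹ * a * c⁻¹) * d = 1 := by
    have : S⁻¹ * b + -(S⁻¹ * a * c⁻¹) * d = S⁻¹ * (b - a * c⁻¹ * d) := by noncomm_ring
    rw [this, ← hSdef, inv_mul_cancel₀ hS]
  refine (isUnit_iff_exists).2 ⟨!![-(c⁻¹ * d * S⁻¹), c⁻¹ + c⁻¹ * d * S⁻¹ * a * c⁻¹;
      S⁻¹, -(S⁻¹ * a * c⁻¹)], ?_, ?_⟩
  · rw [Matrix.mul_fin_two, e1, e2, e3, e4, Matrix.one_fin_two]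
  · rw [Matrix.mul_fin_two, e5, e6, e7, e8, Matrix.one_fin_two]


/-- Abstract ring identity extracted from the non-invertibility condition. -/

lemma key_identity {K : Type*} [Ring K] (u su v sv w γ δ nu nv c₁ c₂ : K)
    (hwv : w * v = 1) (hγδ : γ * δ = 1)
    (husu : u * su = nu) (hsvv : sv * v = nv)
    (hc₂ : ∀ x : K, c₂ * x = x * c₂)
    (hE : (u + c₁) * w * (v * su * w * γ + c₂) = -(sv * γ)) :
    nv + nu + c₁ * su + c₂ * ((u + c₁) * (w * (δ * v))) = 0 := by
  have h2 := congrArg (fun x => x * (δ * v)) hE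
  change (u + c₁) * w * (v * su * w * γ + c₂) * (δ * v) = -(sv * γ) * (δ * v) at h2
  have l1 : (u + c₁) * w * (v * su * w * γ + c₂) * (δ * v)
      = (u + c₁) * (w * v) * su * (w * ((γ * δ) * v)) + (u + c₁) * (w * (c₂ * (δ * v))) := by
    noncomm_ring
  have l2 : -(sv * γ) * (δ * v) = -(sv * ((γ * δ) * v)) := by noncomm_ring
  rw [l1, l2] at h2
  simp only [hwv, hγδ, one_mul, mul_one] at h2
  rw [hsvv, hc₂ (δ * v)] at h2
  have l3 : (u + c₁) * (w * (δ * v * c₂)) = (u + c₁) * (w * (δ * v)) * c₂ := by noncomm_ring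
  rw [l3, add_mul, husu] at h2
  rw [hc₂ ((u + c₁) * (w * (δ * v)))]
  calc nv + nu + c₁ * su + (u + c₁) * (w * (δ * v)) * c₂
      = nv + (nu + c₁ * su + (u + c₁) * (w * (δ * v)) * c₂) := by abel
    _ = nv + -nv := by rw [h2]
    _ = 0 := add_neg_cancel nv

/-- If `v ≠ 0`, `|γ| = 1`, `|u|² + |v|² = 1`, `c₁, c₂ ∈ [0,1]` and the matrix
`[[u + c₁, −v̄γ], [v, v ū v⁻¹ γ + c₂]]` is not invertible, then `c₁ = c₂ = 1`. -/
theorem not_invertible_forces_ones (u v γ : ℍ[ℝ]) (c₁ c₂ : ℝ)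
    (hv : v ≠ 0) (hγ : ‖γ‖ = 1) (huv : ‖u‖ ^ 2 + ‖v‖ ^ 2 = 1)
    (hc₁0 : 0 ≤ c₁) (hc₁1 : c₁ ≤ 1) (hc₂0 : 0 ≤ c₂) (hc₂1 : c₂ ≤ 1)
    (h : ¬ IsUnit (!![u + (c₁ : ℍ[ℝ]), -(star v * γ);
        v, v * star u * v⁻¹ * γ + (c₂ : ℍ[ℝ])])) :
    c₁ = 1 ∧ c₂ = 1 := by
  have hγ0 : γ ≠ 0 := by
    intro h0; rw [h0, norm_zero] at hγ; exact zero_ne_one hγ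
  have hn1 : normSq u + normSq v = 1 := by
    rw [normSq_eq_norm_mul_self, normSq_eq_norm_mul_self, ← pow_two, ← pow_two]; exact huv
  have hnγ : normSq γ = 1 := by rw [normSq_eq_norm_mul_self, hγ, mul_one]
  have hS : -(star v * γ) - (u + (c₁ : ℍ[ℝ])) * v⁻¹ * (v * star u * v⁻¹ * γ + (c₂ : ℍ[ℝ])) = 0 := by
    by_contra hne
    exact h (isUnit_fin_two_of _ _ _ _ hv hne)
  have hE := (sub_eq_zero.mp hS).symm
  have key := key_identity u (star u) v (star v) v⁻¹ γ γ⁻¹ ((normSq u : ℝ) : ℍ[ℝ])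
    ((normSq v : ℝ) : ℍ[ℝ]) ((c₁ : ℝ) : ℍ[ℝ]) ((c₂ : ℝ) : ℍ[ℝ])
    (inv_mul_cancel₀ hv) (mul_inv_cancel₀ hγ0) (self_mul_star u) (star_mul_self v)
    (fun x => coe_commutes c₂ x) hE
  -- rearrange to `1 + c₁ • star u = -(...)`
  have hone : ((normSq v : ℝ) : ℍ[ℝ]) + ((normSq u : ℝ) : ℍ[ℝ]) = 1 := by
    rw [← coe_add, show normSq v + normSq u = 1 by linarith, coe_one]
  have key2 : (1 : ℍ[ℝ]) + (c₁ : ℍ[ℝ]) * star u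
      = -((c₂ : ℍ[ℝ]) * ((u + (c₁ : ℍ[ℝ])) * (v⁻¹ * (γ⁻¹ * v)))) := by
    apply eq_neg_of_add_eq_zero_left
    rw [← hone]
    exact key
  have hns := congrArg normSq key2
  have hnv0 : normSq v ≠ 0 := normSq_ne_zero.mpr hv
  simp only [normSq_neg, _root_.map_mul, normSq_inv, normSq_coe, hnγ, inv_one] at hns
  rw [one_mul, inv_mul_cancel₀ hnv0, mul_one] at hns
  have hL : normSq ((1 : ℍ[ℝ]) + (c₁ : ℍ[ℝ]) * star u)
      = 1 + 2 * c₁ * u.re + c₁ ^ 2 * normSq u := by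
    simp [normSq_def', coe_mul_eq_smul]
    ring
  have hA : normSq (u + (c₁ : ℍ[ℝ])) = normSq u + 2 * c₁ * u.re + c₁ ^ 2 := by
    simp [normSq_def']
    ring
  rw [hL, hA] at hns
  have hN0 : 0 ≤ normSq u := normSq_nonneg
  have hNv : 0 < normSq v := lt_of_le_of_ne normSq_nonneg (Ne.symm hnv0)
  have hN1 : normSq u < 1 := by linarith
  have hA0 : 0 ≤ normSq u + 2 * c₁ * u.re + c₁ ^ 2 := hA ▸ normSq_nonneg
  have hc₁ : c₁ = 1 := by
    have hc₂sq : 0 ≤ 1 - c₂ ^ 2 := by nlinarith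
    have h1 : 1 ≤ c₁ := by
      nlinarith [mul_nonneg hc₂sq hA0,
        mul_pos (show (0:ℝ) < 1 - normSq u by linarith) (show (0:ℝ) < 1 + c₁ by linarith)]
    linarith
  subst hc₁
  refine ⟨rfl, ?_⟩
  have hu1 : u + ((1:ℝ) : ℍ[ℝ]) ≠ 0 := by
    intro h0
    have : u = -1 := by rw [coe_one] at h0; exact eq_neg_of_add_eq_zero_left h0
    rw [this] at hN1
    simp [normSq_neg] at hN1
  have hP : 0 < normSq u + 2 * 1 * u.re + 1 ^ 2 := by
    rw [← hA]
    exact lt_of_le_of_ne normSq_nonneg (Ne.symm (normSq_ne_zero.mpr hu1))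
  have h2 : 1 ≤ c₂ := by
    nlinarith [mul_pos hP (show (0:ℝ) < 1 + c₂ by linarith)]
  linarith
end

section
/- Every element of Sp(2) can be written as P = [[m cos θ ℓ*, −m sin θ b*], [a sin θ ℓ*, a cos θ b*]], where m, ℓ, a, b are unit quaternions and cos θ ∈ [0,1], sin θ = sqrt(1 − cos²θ) ≥ 0. -/
open Quaternion Matrix

set_option maxHeartbeats 1000000 in
/-- Every element of `Sp(2)` can be written as
`[[m cos θ ℓ*, −m sin θ b*], [a sin θ ℓ*, a cos θ b*]]` with `m, ℓ, a, b` unit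
quaternions, `cos θ ∈ [0,1]` and `sin θ = sqrt(1 − cos²θ) ≥ 0`. -/
theorem sp2_decomposition (P : Matrix (Fin 2) (Fin 2) ℍ[ℝ]) (hP : P * Pᴴ = 1) :
    ∃ (m ℓ a b : ℍ[ℝ]) (c : ℝ),
      ‖m‖ = 1 ∧ ‖ℓ‖ = 1 ∧ ‖a‖ = 1 ∧ ‖b‖ = 1 ∧ 0 ≤ c ∧ c ≤ 1 ∧
      P = !![m * (c : ℍ[ℝ]) * star ℓ, -(m * (Real.sqrt (1 - c ^ 2) : ℍ[ℝ]) * star b);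
            a * (Real.sqrt (1 - c ^ 2) : ℍ[ℝ]) * star ℓ, a * (c : ℍ[ℝ]) * star b] := by
  -- entry equations
  have E1 : P 0 0 * star (P 0 0) + P 0 1 * star (P 0 1) = 1 := by
    have := congrFun (congrFun hP 0) 0
    simpa [Matrix.mul_apply, Fin.sum_univ_two, Matrix.conjTranspose_apply,
      Matrix.one_apply] using this
  have E2 : P 1 0 * star (P 1 0) + P 1 1 * star (P 1 1) = 1 := by
    have := congrFun (congrFun hP 1) 1
    simpa [Matrix.mul_apply, Fin.sum_univ_two, Matrix.conjTranspose_apply,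
      Matrix.one_apply] using this
  have E3 : P 0 0 * star (P 1 0) + P 0 1 * star (P 1 1) = 0 := by
    have := congrFun (congrFun hP 0) 1
    simpa [Matrix.mul_apply, Fin.sum_univ_two, Matrix.conjTranspose_apply,
      Matrix.one_apply] using this
  -- real versions
  have hn1 : ‖P 0 0‖ ^ 2 + ‖P 0 1‖ ^ 2 = 1 := by
    have h := E1
    rw [Quaternion.self_mul_star, Quaternion.self_mul_star, ← Quaternion.coe_add] at h
    have := Quaternion.coe_injective (h.trans (Quaternion.coe_one).symm)
    simpa [Quaternion.normSq_eq_norm_mul_self, sq] using this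
  have hn2 : ‖P 1 0‖ ^ 2 + ‖P 1 1‖ ^ 2 = 1 := by
    have h := E2
    rw [Quaternion.self_mul_star, Quaternion.self_mul_star, ← Quaternion.coe_add] at h
    have := Quaternion.coe_injective (h.trans (Quaternion.coe_one).symm)
    simpa [Quaternion.normSq_eq_norm_mul_self, sq] using this
  have E3' : P 0 0 * star (P 1 0) = -(P 0 1 * star (P 1 1)) :=
    eq_neg_of_add_eq_zero_left E3
  have hcross : ‖P 0 0‖ * ‖P 1 0‖ = ‖P 0 1‖ * ‖P 1 1‖ := by
    have := congrArg norm E3'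
    simpa [norm_mul, norm_neg, norm_star] using this
  -- derived norm identities
  have h01 : ‖P 0 1‖ = ‖P 1 0‖ := by
    have hc2 : (‖P 0 0‖ * ‖P 1 0‖) ^ 2 = (‖P 0 1‖ * ‖P 1 1‖) ^ 2 := by rw [hcross]
    have hsq : ‖P 0 1‖ ^ 2 = ‖P 1 0‖ ^ 2 := by nlinarith [hc2, sq_nonneg (‖P 1 0‖), sq_nonneg (‖P 0 1‖), sq_nonneg (‖P 0 0‖), sq_nonneg (‖P 1 1‖)]
    have := congrArg Real.sqrt hsq
    rwa [Real.sqrt_sq (norm_nonneg _), Real.sqrt_sq (norm_nonneg _)] at this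
  have h00 : ‖P 0 0‖ = ‖P 1 1‖ := by
    have h01sq : ‖P 0 1‖ ^ 2 = ‖P 1 0‖ ^ 2 := by rw [h01]
    have hsq : ‖P 0 0‖ ^ 2 = ‖P 1 1‖ ^ 2 := by linarith
    have := congrArg Real.sqrt hsq
    rwa [Real.sqrt_sq (norm_nonneg _), Real.sqrt_sq (norm_nonneg _)] at this
  set c : ℝ := ‖P 1 1‖ with hc
  have hc0 : 0 ≤ c := norm_nonneg _
  have hc1 : c ≤ 1 := by nlinarith [norm_nonneg (P 1 0)]
  have hs : Real.sqrt (1 - c ^ 2) = ‖P 1 0‖ := by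
    rw [show 1 - c ^ 2 = ‖P 1 0‖ ^ 2 by linarith]
    exact Real.sqrt_sq (norm_nonneg _)
  by_cases hcc1 : c = 1
  · -- θ = 0 : off-diagonal entries vanish
    have h10z : P 1 0 = 0 := by
      have : ‖P 1 0‖ ^ 2 = 0 := by rw [hcc1] at hn2; linarith
      simpa [pow_eq_zero_iff] using this
    have h01z : P 0 1 = 0 := by
      rw [← norm_eq_zero, h01, norm_eq_zero]; exact h10z
    refine ⟨P 0 0, 1, P 1 1, 1, 1, by rw [h00]; exact hcc1, norm_one, hcc1,
      norm_one, by norm_num, le_refl 1, ?_⟩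
    refine Matrix.ext fun i j => ?_
    fin_cases i <;> fin_cases j <;>
      norm_num [h10z, h01z, Quaternion.coe_one]
  · by_cases hcc0 : c = 0
    · -- θ = π/2 : diagonal entries vanish
      have h11z : P 1 1 = 0 := by
        rw [← norm_eq_zero]; exact hcc0
      have h00z : P 0 0 = 0 := by
        rw [← norm_eq_zero, h00]; exact hcc0
      have h10n : ‖P 1 0‖ = 1 := by
        have : ‖P 1 0‖ ^ 2 = 1 := by rw [hcc0] at hn2; linarith
        nlinarith [norm_nonneg (P 1 0)]
      refine ⟨-(P 0 1), 1, P 1 0, 1, 0, by rw [norm_neg, h01, h10n], norm_one, h10n,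
        norm_one, le_refl 0, by norm_num, ?_⟩
      refine Matrix.ext fun i j => ?_
      fin_cases i <;> fin_cases j <;>
        norm_num [h11z, h00z, Quaternion.coe_one]
    · -- generic case 0 < c < 1
      have hcpos : 0 < c := lt_of_le_of_ne hc0 (Ne.symm hcc0)
      have hclt : c < 1 := lt_of_le_of_ne hc1 hcc1
      have hs2 : ‖P 1 0‖ ^ 2 = 1 - c ^ 2 := by rw [hc]; linarith
      have hspos : 0 < ‖P 1 0‖ := by nlinarith [norm_nonneg (P 1 0)]
      set s : ℝ := ‖P 1 0‖ with hsdef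
      have hsne : s ≠ 0 := ne_of_gt hspos
      have hcne : c ≠ 0 := ne_of_gt hcpos
      set a : ℍ[ℝ] := s⁻¹ • P 1 0 with ha
      have hna : ‖a‖ = 1 := by
        rw [ha, norm_smul, norm_inv, Real.norm_eq_abs, abs_of_pos hspos, ← hsdef]
        field_simp
      set b : ℍ[ℝ] := c⁻¹ • (star (P 1 1) * a) with hb
      have hnb : ‖b‖ = 1 := by
        rw [hb, norm_smul, norm_mul, Quaternion.norm_star, norm_inv, Real.norm_eq_abs,
          abs_of_pos hcpos, hna]
        field_simp
        exact hc.symm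
      set m : ℍ[ℝ] := -(s⁻¹ • (P 0 1 * b)) with hm
      have hnm : ‖m‖ = 1 := by
        rw [hm, norm_neg, norm_smul, norm_mul, hnb, norm_inv, Real.norm_eq_abs,
          abs_of_pos hspos, h01]
        field_simp
      have haa : a * star a = 1 := by
        rw [Quaternion.self_mul_star, Quaternion.normSq_eq_norm_mul_self, hna]
        norm_num
      have hbb : b * star b = 1 := by
        rw [Quaternion.self_mul_star, Quaternion.normSq_eq_norm_mul_self, hnb]
        norm_num
      have hss : star (P 1 0) * P 1 0 = ((s * s : ℝ) : ℍ[ℝ]) := by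
        rw [Quaternion.star_mul_self, Quaternion.normSq_eq_norm_mul_self, ← hsdef]
      have hsb : star b = c⁻¹ • (star a * P 1 1) := by
        rw [hb, Quaternion.star_smul, StarMul.star_mul, star_star]
      -- the four entry identities
      have e10 : a * ((s : ℝ) : ℍ[ℝ]) * star (1 : ℍ[ℝ]) = P 1 0 := by
        rw [star_one, mul_one, ha, Quaternion.mul_coe_eq_smul, smul_smul,
          mul_inv_cancel₀ hsne, one_smul]
      have e11 : a * ((c : ℝ) : ℍ[ℝ]) * star b = P 1 1 := by
        rw [hsb, Quaternion.mul_coe_eq_smul, smul_mul_assoc, mul_smul_comm, smul_smul,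
          mul_inv_cancel₀ hcne, one_smul, ← mul_assoc, haa, one_mul]
      have e01 : -(m * ((s : ℝ) : ℍ[ℝ]) * star b) = P 0 1 := by
        rw [hm, neg_mul, neg_mul, neg_neg, Quaternion.mul_coe_eq_smul, smul_smul,
          mul_inv_cancel₀ hsne, one_smul, mul_assoc, hbb, mul_one]
      have hb2 : P 0 1 * b = (c⁻¹ * s⁻¹) • (P 0 1 * (star (P 1 1) * P 1 0)) := by
        rw [hb, ha]
        simp only [mul_smul_comm, smul_smul, mul_assoc]
      have e00 : m * ((c : ℝ) : ℍ[ℝ]) * star (1 : ℍ[ℝ]) = P 0 0 := by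
        have k1 : (s * s) • P 0 0 = -(P 0 1 * star (P 1 1) * P 1 0) := by
          have h := congrArg (· * P 1 0) E3'
          simp only [neg_mul] at h
          rw [mul_assoc, hss, Quaternion.mul_coe_eq_smul] at h
          exact h
        rw [star_one, mul_one, hm, neg_mul, Quaternion.mul_coe_eq_smul, smul_smul,
          hb2, smul_smul, show c * s⁻¹ * (c⁻¹ * s⁻¹) = s⁻¹ * s⁻¹ by field_simp]
        calc -((s⁻¹ * s⁻¹) • (P 0 1 * (star (P 1 1) * P 1 0)))
            = (s⁻¹ * s⁻¹) • -(P 0 1 * star (P 1 1) * P 1 0) := by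
              rw [mul_assoc, smul_neg]
          _ = (s⁻¹ * s⁻¹) • ((s * s) • P 0 0) := by rw [k1]
          _ = P 0 0 := by
              rw [smul_smul, show s⁻¹ * s⁻¹ * (s * s) = 1 by field_simp, one_smul]
      refine ⟨m, 1, a, b, c, hnm, norm_one, hna, hnb, hc0, hc1, ?_⟩
      refine Matrix.ext fun i j => ?_
      rw [show Real.sqrt (1 - c ^ 2) = s from hs]
      fin_cases i <;> fin_cases j <;>
        simp only [Matrix.cons_val', Matrix.cons_val_zero, Matrix.cons_val_one,
          Matrix.head_cons, Matrix.head_fin_const, Matrix.empty_val',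
          Matrix.cons_val_fin_one, Matrix.of_apply, Fin.isValue]
      · exact e00.symm
      · exact e01.symm
      · exact e10.symm
      · exact e11.symm
end

section
/- For every P ∈ Sp(2) there exist ε₁, ε₂ ∈ {−1, 1} such that P + diag(ε₁, ε₂) is invertible. Consequently the four sets Ω(diag(ε₁,ε₂)) = { A ∈ Sp(2) : A + diag(ε₁,ε₂) invertible }, for ε₁, ε₂ ∈ {−1,1}, cover Sp(2). -/
open Quaternion Matrix

/-- Over a division ring, a square matrix that is not a unit has a nonzero
left kernel vector. -/
lemma exists_vecMul_eq_zero' {n : Type*} [Fintype n] [DecidableEq n] {K : Type*}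
    [DivisionRing K] {M : Matrix n n K} (h : ¬IsUnit M) :
    ∃ v : n → K, v ≠ 0 ∧ v ᵥ* M = 0 := by
  by_contra hc
  push_neg at hc
  apply h
  have hinj : Function.Injective (Matrix.toLinearMapRight' (R := K) (m := n) (n := n) M) := by
    rw [← LinearMap.ker_eq_bot, LinearMap.ker_eq_bot']
    intro v hv
    by_contra hv0
    exact hc v hv0 hv
  have hsurj : Function.Surjective (Matrix.toLinearMapRight' (R := K) (m := n) (n := n) M) :=
    LinearMap.injective_iff_surjective.mp hinj
  let e : (n → K) ≃ₗ[K] (n → K) := LinearEquiv.ofBijective _ ⟨hinj, hsurj⟩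
  let N : Matrix n n K := Matrix.toLinearMapRight'.symm e.symm.toLinearMap
  have hN : Matrix.toLinearMapRight' N = e.symm.toLinearMap :=
    Matrix.toLinearMapRight'.apply_symm_apply _
  refine ⟨⟨M, N, ?_, ?_⟩, rfl⟩
  · apply Matrix.toLinearMapRight'.injective
    rw [Matrix.toLinearMapRight'_mul, Matrix.toLinearMapRight'_one, hN]
    exact LinearMap.ext fun x => e.symm_apply_apply x
  · apply Matrix.toLinearMapRight'.injective
    rw [Matrix.toLinearMapRight'_mul, Matrix.toLinearMapRight'_one, hN]
    exact LinearMap.ext fun x => e.apply_symm_apply x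

/-- Rows of `P` with `P * Pᴴ = 1` preserve the quaternionic inner product of row vectors. -/
lemma pair_eq (P : Matrix (Fin 2) (Fin 2) ℍ[ℝ]) (hP : P * Pᴴ = 1)
    (v w : Fin 2 → ℍ[ℝ]) (a b c d : ℝ)
    (hv0 : (v ᵥ* P) 0 = a • v 0) (hv1 : (v ᵥ* P) 1 = b • v 1)
    (hw0 : (w ᵥ* P) 0 = c • w 0) (hw1 : (w ᵥ* P) 1 = d • w 1) :
    v 0 * star (w 0) + v 1 * star (w 1)
      = (a * c) • (v 0 * star (w 0)) + (b * d) • (v 1 * star (w 1)) := by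
  have hstar : (fun j => star ((w ᵥ* P) j)) = Pᴴ *ᵥ fun i => star (w i) := by
    funext j
    simp [Matrix.vecMul, Matrix.mulVec, dotProduct, Fin.sum_univ_two,
      Matrix.conjTranspose_apply, star_add, StarMul.star_mul]
  have key : (v ᵥ* P) 0 * star ((w ᵥ* P) 0) + (v ᵥ* P) 1 * star ((w ᵥ* P) 1)
      = v 0 * star (w 0) + v 1 * star (w 1) := by
    have h1 : (v ᵥ* P) 0 * star ((w ᵥ* P) 0) + (v ᵥ* P) 1 * star ((w ᵥ* P) 1)
        = (v ᵥ* P) ⬝ᵥ (Pᴴ *ᵥ fun i => star (w i)) := by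
      rw [← hstar]; simp [dotProduct, Fin.sum_univ_two]
    rw [h1, dotProduct_mulVec, Matrix.vecMul_vecMul, hP, Matrix.vecMul_one]
    simp [dotProduct, Fin.sum_univ_two]
  rw [hv0, hv1, hw0, hw1] at key
  rw [← key]
  simp only [Quaternion.star_smul, smul_mul_assoc, mul_smul_comm, smul_smul]
  rw [mul_comm c a, mul_comm d b]

/-- Cancellation helper : `(2:ℝ) • x = 0 → x = 0` in the quaternions. -/
lemma two_smul_eq_zero {x : ℍ[ℝ]} (h : (2:ℝ) • x = 0) : x = 0 := by
  rcases smul_eq_zero.mp h with h | h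
  · norm_num at h
  · exact h

/-- `x = -x` forces `x = 0` in the quaternions. -/
lemma q_self_neg {x : ℍ[ℝ]} (h : x = -x) : x = 0 := by
  refine two_smul_eq_zero ?_
  rw [two_smul]
  nth_rewrite 1 [h]
  exact neg_add_cancel x

/-- For every `P ∈ Sp(2)` there exist signs `ε₁, ε₂ ∈ {−1, 1}` such that
`P + diag(ε₁, ε₂)` is invertible; hence the four Cayley open sets
`Ω(diag(ε₁, ε₂))` cover `Sp(2)`. -/
theorem sp2_cayley_cover (P : Matrix (Fin 2) (Fin 2) ℍ[ℝ]) (hP : P * Pᴴ = 1) :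
    ∃ ε₁ ε₂ : ℝ, (ε₁ = 1 ∨ ε₁ = -1) ∧ (ε₂ = 1 ∨ ε₂ = -1) ∧
      IsUnit (P + Matrix.diagonal ![(ε₁ : ℍ[ℝ]), (ε₂ : ℍ[ℝ])]) := by
  by_contra hcon
  push_neg at hcon
  -- extract, for each sign choice, a nonzero left-kernel vector
  have extract : ∀ ε₁ ε₂ : ℝ, (ε₁ = 1 ∨ ε₁ = -1) → (ε₂ = 1 ∨ ε₂ = -1) →
      ∃ v : Fin 2 → ℍ[ℝ], v ≠ 0 ∧
        (v ᵥ* P) 0 = (-ε₁) • v 0 ∧ (v ᵥ* P) 1 = (-ε₂) • v 1 := by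
    intro ε₁ ε₂ h₁ h₂
    obtain ⟨v, hv, hker⟩ := exists_vecMul_eq_zero' (hcon ε₁ ε₂ h₁ h₂)
    refine ⟨v, hv, ?_, ?_⟩
    · have := congrFun hker 0
      rw [Matrix.vecMul_add] at this
      simp only [Pi.add_apply, Matrix.vecMul_diagonal] at this
      simp only [Matrix.cons_val_zero] at this
      rw [eq_neg_of_add_eq_zero_left this, Quaternion.mul_coe_eq_smul, ← neg_smul]
    · have := congrFun hker 1
      rw [Matrix.vecMul_add] at this
      simp only [Pi.add_apply, Matrix.vecMul_diagonal] at this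
      simp only [Matrix.cons_val_one, Matrix.head_cons, Matrix.cons_val_zero] at this
      rw [eq_neg_of_add_eq_zero_left this, Quaternion.mul_coe_eq_smul, ← neg_smul]
  obtain ⟨v1, hv1, hv1a, hv1b⟩ := extract 1 1 (Or.inl rfl) (Or.inl rfl)
  obtain ⟨v2, hv2, hv2a, hv2b⟩ := extract 1 (-1) (Or.inl rfl) (Or.inr rfl)
  obtain ⟨v3, hv3, hv3a, hv3b⟩ := extract (-1) 1 (Or.inr rfl) (Or.inl rfl)
  obtain ⟨v4, hv4, hv4a, hv4b⟩ := extract (-1) (-1) (Or.inr rfl) (Or.inr rfl)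
  have nz : ∀ v : Fin 2 → ℍ[ℝ], v ≠ 0 → ¬(v 0 = 0 ∧ v 1 = 0) := by
    intro v hv h
    apply hv
    funext i
    fin_cases i
    · simpa using h.1
    · simpa using h.2
  -- pairwise orthogonality relations
  have h12 : v1 1 * star (v2 1) = 0 := by
    have h := pair_eq P hP v1 v2 (-1) (-1) (-1) (-(-1)) hv1a hv1b hv2a hv2b
    rw [show ((-1 : ℝ) * -1) = 1 by norm_num, show ((-1 : ℝ) * -(-1)) = -1 by norm_num,
      one_smul, neg_one_smul] at h
    exact q_self_neg (add_left_cancel h)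
  have h13 : v1 0 * star (v3 0) = 0 := by
    have h := pair_eq P hP v1 v3 (-1) (-1) (-(-1)) (-1) hv1a hv1b hv3a hv3b
    rw [show ((-1 : ℝ) * -(-1)) = -1 by norm_num, show ((-1 : ℝ) * -1) = 1 by norm_num,
      one_smul, neg_one_smul] at h
    exact q_self_neg (add_right_cancel h)
  have h14 : v1 0 * star (v4 0) + v1 1 * star (v4 1) = 0 := by
    have h := pair_eq P hP v1 v4 (-1) (-1) (-(-1)) (-(-1)) hv1a hv1b hv4a hv4b
    rw [show ((-1 : ℝ) * -(-1)) = -1 by norm_num, neg_one_smul, neg_one_smul] at h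
    exact q_self_neg (h.trans (neg_add _ _).symm)
  have h23 : v2 0 * star (v3 0) + v2 1 * star (v3 1) = 0 := by
    have h := pair_eq P hP v2 v3 (-1) (-(-1)) (-(-1)) (-1) hv2a hv2b hv3a hv3b
    rw [show ((-1 : ℝ) * -(-1)) = -1 by norm_num, show ((-(-1) : ℝ) * -1) = -1 by norm_num,
      neg_one_smul, neg_one_smul] at h
    exact q_self_neg (h.trans (neg_add _ _).symm)
  have h24 : v2 0 * star (v4 0) = 0 := by
    have h := pair_eq P hP v2 v4 (-1) (-(-1)) (-(-1)) (-(-1)) hv2a hv2b hv4a hv4b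
    rw [show ((-1 : ℝ) * -(-1)) = -1 by norm_num, show ((-(-1) : ℝ) * -(-1)) = 1 by norm_num,
      one_smul, neg_one_smul] at h
    exact q_self_neg (add_right_cancel h)
  have h34 : v3 1 * star (v4 1) = 0 := by
    have h := pair_eq P hP v3 v4 (-(-1)) (-1) (-(-1)) (-(-1)) hv3a hv3b hv4a hv4b
    rw [show ((-(-1) : ℝ) * -(-1)) = 1 by norm_num, show ((-1 : ℝ) * -(-1)) = -1 by norm_num,
      one_smul, neg_one_smul] at h
    exact q_self_neg (add_left_cancel h)
  rcases mul_eq_zero.mp h13 with ha1 | ha3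
  · -- v1 0 = 0
    have ha1' : v1 0 = 0 := ha1
    have b1 : v1 1 ≠ 0 := fun hb => nz v1 hv1 ⟨ha1', hb⟩
    have b2 : v2 1 = 0 := by
      rcases mul_eq_zero.mp h12 with h' | h'
      · exact absurd h' b1
      · exact star_eq_zero.mp h'
    have a2 : v2 0 ≠ 0 := fun ha => nz v2 hv2 ⟨ha, b2⟩
    have a4 : v4 0 = 0 := by
      rcases mul_eq_zero.mp h24 with h' | h'
      · exact absurd h' a2
      · exact star_eq_zero.mp h'
    have b4 : v4 1 ≠ 0 := fun hb => nz v4 hv4 ⟨a4, hb⟩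
    have b3 : v3 1 = 0 := by
      rcases mul_eq_zero.mp h34 with h' | h'
      · exact h'
      · exact absurd (star_eq_zero.mp h') b4
    have a3 : v3 0 ≠ 0 := fun ha => nz v3 hv3 ⟨ha, b3⟩
    rw [b2, b3] at h23
    simp only [zero_mul, add_zero] at h23
    rcases mul_eq_zero.mp h23 with h' | h'
    · exact a2 h'
    · exact a3 (star_eq_zero.mp h')
  · -- v3 0 = 0
    have ha3' : v3 0 = 0 := star_eq_zero.mp ha3
    have b3 : v3 1 ≠ 0 := fun hb => nz v3 hv3 ⟨ha3', hb⟩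
    have b4 : v4 1 = 0 := by
      rcases mul_eq_zero.mp h34 with h' | h'
      · exact absurd h' b3
      · exact star_eq_zero.mp h'
    have a4 : v4 0 ≠ 0 := fun ha => nz v4 hv4 ⟨ha, b4⟩
    have a2 : v2 0 = 0 := by
      rcases mul_eq_zero.mp h24 with h' | h'
      · exact h'
      · exact absurd (star_eq_zero.mp h') a4
    have b2 : v2 1 ≠ 0 := fun hb => nz v2 hv2 ⟨a2, hb⟩
    have b1 : v1 1 = 0 := by
      rcases mul_eq_zero.mp h12 with h' | h'
      · exact h'
      · exact absurd (star_eq_zero.mp h') b2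
    have a1 : v1 0 ≠ 0 := fun ha => nz v1 hv1 ⟨ha, b1⟩
    rw [b1, b4] at h14
    simp only [zero_mul, star_zero, mul_zero, add_zero] at h14
    rcases mul_eq_zero.mp h14 with h' | h'
    · exact a1 h'
    · exact a4 (star_eq_zero.mp h')
end
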